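/- (Theorem 3.2, first part) Let (x_0, ξ_0) ∈ ℝⁿ × ℝⁿ, and suppose that for each k ≥ 1 the pair (x_k, ξ_k) is a global minimizer of the surrogate φ^{ξ_{k−1}} over ℝⁿ × ℝⁿ. Then ‖x_k − x_{k−1}‖ → 0 and ‖ξ_k − ξ_{k−1}‖ → 0 as k → ∞, where ‖·‖ is the Euclidean norm. -/

import Mathlib

open scoped BigOperators

/-- Weighted squared norm `‖v‖²_M = vᵀ M v`. -/
noncomputable def wnormSq {m : ℕ} (M : Matrix (Fin m) (Fin m) ℝ) (v : Fin m → ℝ) : ℝ :=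
  dotProduct v (M.mulVec v)

/-- The smoothed objective
`φ(x, ξ) = ‖A Q x + A ξ − b‖²_{R⁻¹} + λx² ‖x‖²_Q + λξ² Σᵢ √(ξᵢ² + τ²)`. -/
noncomputable def phi {m n : ℕ} (A : Matrix (Fin m) (Fin n) ℝ) (b : Fin m → ℝ)
    (R : Matrix (Fin m) (Fin m) ℝ) (Q : Matrix (Fin n) (Fin n) ℝ)
    (lx lξ τ : ℝ) (x ξ : Fin n → ℝ) : ℝ :=
  wnormSq R⁻¹ (A.mulVec (Q.mulVec x) + A.mulVec ξ - b) + lx ^ 2 * wnormSq Q x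
    + lξ ^ 2 * ∑ i, Real.sqrt ((ξ i) ^ 2 + τ ^ 2)

/-- The quadratic surrogate
`φ^ζ(x, ξ) = ‖A Q x + A ξ − b‖²_{R⁻¹} + λx² ‖x‖²_Q
  + λξ² Σᵢ [ (ξᵢ² + τ²)/(2 √(ζᵢ² + τ²)) + √(ζᵢ² + τ²)/2 ]`. -/
noncomputable def phiSur {m n : ℕ} (A : Matrix (Fin m) (Fin n) ℝ) (b : Fin m → ℝ)
    (R : Matrix (Fin m) (Fin m) ℝ) (Q : Matrix (Fin n) (Fin n) ℝ)
    (lx lξ τ : ℝ) (ζ x ξ : Fin n → ℝ) : ℝ :=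
  wnormSq R⁻¹ (A.mulVec (Q.mulVec x) + A.mulVec ξ - b) + lx ^ 2 * wnormSq Q x
    + lξ ^ 2 * ∑ i, (((ξ i) ^ 2 + τ ^ 2) / (2 * Real.sqrt ((ζ i) ^ 2 + τ ^ 2))
        + Real.sqrt ((ζ i) ^ 2 + τ ^ 2) / 2)

/-! ### Auxiliary lemmas -/

lemma wnormSq_nonneg {m : ℕ} {M : Matrix (Fin m) (Fin m) ℝ} (hM : M.PosSemidef)
    (v : Fin m → ℝ) : 0 ≤ wnormSq M v := by
  simpa [wnormSq] using hM.dotProduct_mulVec_nonneg v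

lemma wnormSq_pos {n : ℕ} {Q : Matrix (Fin n) (Fin n) ℝ} (hQ : Q.PosDef)
    {v : Fin n → ℝ} (hv : v ≠ 0) : 0 < wnormSq Q v := by
  simpa [wnormSq] using hQ.dotProduct_mulVec_pos hv

lemma wnormSq_smul {m : ℕ} (M : Matrix (Fin m) (Fin m) ℝ) (c : ℝ) (v : Fin m → ℝ) :
    wnormSq M (c • v) = c ^ 2 * wnormSq M v := by
  simp [wnormSq, Matrix.mulVec_smul, dotProduct_smul, smul_dotProduct,
    smul_eq_mul]
  ring

lemma wnormSq_midpoint {m : ℕ} (M : Matrix (Fin m) (Fin m) ℝ) (u v : Fin m → ℝ) :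
    wnormSq M ((1/2 : ℝ) • (u + v)) =
      (wnormSq M u + wnormSq M v) / 2 - wnormSq M ((1/2 : ℝ) • (u - v)) := by
  rw [wnormSq_smul, wnormSq_smul]
  simp only [wnormSq, Matrix.mulVec_add, Matrix.mulVec_sub, dotProduct_add,
    dotProduct_sub, add_dotProduct, sub_dotProduct]
  ring

lemma posdef_coercive {n : ℕ} (hn : 0 < n) {Q : Matrix (Fin n) (Fin n) ℝ} (hQ : Q.PosDef) :
    ∃ μ : ℝ, 0 < μ ∧ ∀ v : Fin n → ℝ, μ * ∑ i, v i ^ 2 ≤ wnormSq Q v := by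
  haveI : Nonempty (Fin n) := ⟨⟨0, hn⟩⟩
  have hf : Continuous fun v : Fin n → ℝ => wnormSq Q v := by
    have : (fun v : Fin n → ℝ => wnormSq Q v)
        = fun v => ∑ i, v i * ∑ j, Q i j * v j := by
      funext v; simp [wnormSq, Matrix.mulVec, dotProduct]
    rw [this]
    exact continuous_finset_sum _ fun i _ => (continuous_apply i).mul
      (continuous_finset_sum _ fun j _ => (continuous_const.mul (continuous_apply j)))
  have hS : (Metric.sphere (0 : Fin n → ℝ) 1).Nonempty := by
    refine ⟨fun _ => 1, ?_⟩
    simp [Metric.mem_sphere, dist_zero_right]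
  obtain ⟨v0, hv0S, hv0min⟩ :=
    (isCompact_sphere (0 : Fin n → ℝ) 1).exists_isMinOn hS hf.continuousOn
  have hv0norm : ‖v0‖ = 1 := by simpa [dist_zero_right] using hv0S
  have hv0ne : v0 ≠ 0 := by
    intro h; rw [h, norm_zero] at hv0norm; norm_num at hv0norm
  set μ0 : ℝ := wnormSq Q v0 with hμ0
  have hμ0pos : 0 < μ0 := wnormSq_pos hQ hv0ne
  refine ⟨μ0 / n, div_pos hμ0pos (by exact_mod_cast hn), fun v => ?_⟩
  rcases eq_or_ne v 0 with rfl | hv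
  · simp [wnormSq]
  · have hnv : 0 < ‖v‖ := norm_pos_iff.mpr hv
    have hu : (‖v‖⁻¹ • v) ∈ Metric.sphere (0 : Fin n → ℝ) 1 := by
      simp [Metric.mem_sphere, dist_zero_right, norm_smul, abs_of_pos (inv_pos.mpr hnv),
        inv_mul_cancel₀ (ne_of_gt hnv)]
    have h1 : μ0 ≤ wnormSq Q (‖v‖⁻¹ • v) := hv0min hu
    rw [wnormSq_smul] at h1
    have h2 : μ0 * ‖v‖ ^ 2 ≤ wnormSq Q v := by
      have := mul_le_mul_of_nonneg_right h1 (le_of_lt (pow_pos hnv 2))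
      calc μ0 * ‖v‖ ^ 2 ≤ ‖v‖⁻¹ ^ 2 * wnormSq Q v * ‖v‖ ^ 2 := this
        _ = wnormSq Q v := by field_simp
    have h3 : ∑ i, v i ^ 2 ≤ n * ‖v‖ ^ 2 := by
      calc ∑ i, v i ^ 2 ≤ ∑ _i : Fin n, ‖v‖ ^ 2 := by
            refine Finset.sum_le_sum fun i _ => ?_
            have h4 : |v i| ≤ ‖v‖ := by simpa using norm_le_pi_norm v i
            calc v i ^ 2 = |v i| ^ 2 := (sq_abs _).symm
              _ ≤ ‖v‖ ^ 2 := pow_le_pow_left₀ (abs_nonneg _) h4 2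
        _ = n * ‖v‖ ^ 2 := by simp [Finset.sum_const, mul_comm]
    calc μ0 / n * ∑ i, v i ^ 2 ≤ μ0 / n * (n * ‖v‖ ^ 2) := by
          refine mul_le_mul_of_nonneg_left h3 ?_
          positivity
      _ = μ0 * ‖v‖ ^ 2 := by field_simp
      _ ≤ wnormSq Q v := h2

lemma sqrt_le_sur {τ : ℝ} (hτ : 0 < τ) (a ζ : ℝ) :
    Real.sqrt (a ^ 2 + τ ^ 2) ≤
      (a ^ 2 + τ ^ 2) / (2 * Real.sqrt (ζ ^ 2 + τ ^ 2)) + Real.sqrt (ζ ^ 2 + τ ^ 2) / 2 := by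
  set s := Real.sqrt (a ^ 2 + τ ^ 2) with hs
  set t := Real.sqrt (ζ ^ 2 + τ ^ 2) with ht
  have hspos : 0 ≤ s := Real.sqrt_nonneg _
  have htpos : 0 < t := Real.sqrt_pos.mpr (by positivity)
  have hs2 : s ^ 2 = a ^ 2 + τ ^ 2 := Real.sq_sqrt (by positivity)
  rw [← hs2]
  rw [div_add_div _ _ (by positivity) (by norm_num), le_div_iff₀ (by positivity)]
  nlinarith [sq_nonneg (s - t)]

lemma sur_self {τ : ℝ} (hτ : 0 < τ) (ζ : ℝ) :
    (ζ ^ 2 + τ ^ 2) / (2 * Real.sqrt (ζ ^ 2 + τ ^ 2)) + Real.sqrt (ζ ^ 2 + τ ^ 2) / 2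
      = Real.sqrt (ζ ^ 2 + τ ^ 2) := by
  set t := Real.sqrt (ζ ^ 2 + τ ^ 2) with ht
  have htpos : 0 < t := Real.sqrt_pos.mpr (by positivity)
  have hs2 : t ^ 2 = ζ ^ 2 + τ ^ 2 := Real.sq_sqrt (by positivity)
  rw [← hs2]
  field_simp
  ring

lemma residual_mid {m n : ℕ} (A : Matrix (Fin m) (Fin n) ℝ) (b : Fin m → ℝ)
    (Q : Matrix (Fin n) (Fin n) ℝ) (x1 x2 ξ1 ξ2 : Fin n → ℝ) :
    A.mulVec (Q.mulVec ((1/2 : ℝ) • (x1 + x2))) + A.mulVec ((1/2 : ℝ) • (ξ1 + ξ2)) - b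
      = (1/2 : ℝ) • ((A.mulVec (Q.mulVec x1) + A.mulVec ξ1 - b)
          + (A.mulVec (Q.mulVec x2) + A.mulVec ξ2 - b)) := by
  simp only [Matrix.mulVec_smul, Matrix.mulVec_add]
  funext i
  simp only [Pi.add_apply, Pi.sub_apply, Pi.smul_apply, smul_eq_mul]
  ring

lemma residual_diff {m n : ℕ} (A : Matrix (Fin m) (Fin n) ℝ) (b : Fin m → ℝ)
    (Q : Matrix (Fin n) (Fin n) ℝ) (x1 x2 ξ1 ξ2 : Fin n → ℝ) :
    (A.mulVec (Q.mulVec x1) + A.mulVec ξ1 - b) - (A.mulVec (Q.mulVec x2) + A.mulVec ξ2 - b)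
      = A.mulVec (Q.mulVec (x1 - x2)) + A.mulVec (ξ1 - ξ2) := by
  simp only [Matrix.mulVec_sub]
  funext i
  simp only [Pi.add_apply, Pi.sub_apply]
  ring

lemma phi_le_phiSur {m n : ℕ} (A : Matrix (Fin m) (Fin n) ℝ) (b : Fin m → ℝ)
    (R : Matrix (Fin m) (Fin m) ℝ) (Q : Matrix (Fin n) (Fin n) ℝ)
    (lx lξ τ : ℝ) (hτ : 0 < τ) (ζ x ξ : Fin n → ℝ) :
    phi A b R Q lx lξ τ x ξ ≤ phiSur A b R Q lx lξ τ ζ x ξ := by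
  unfold phi phiSur
  have h : ∑ i, Real.sqrt ((ξ i) ^ 2 + τ ^ 2)
      ≤ ∑ i, (((ξ i) ^ 2 + τ ^ 2) / (2 * Real.sqrt ((ζ i) ^ 2 + τ ^ 2))
          + Real.sqrt ((ζ i) ^ 2 + τ ^ 2) / 2) :=
    Finset.sum_le_sum fun i _ => sqrt_le_sur hτ _ _
  have := mul_le_mul_of_nonneg_left h (sq_nonneg lξ)
  linarith

lemma phiSur_self {m n : ℕ} (A : Matrix (Fin m) (Fin n) ℝ) (b : Fin m → ℝ)
    (R : Matrix (Fin m) (Fin m) ℝ) (Q : Matrix (Fin n) (Fin n) ℝ)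
    (lx lξ τ : ℝ) (hτ : 0 < τ) (ζ x : Fin n → ℝ) :
    phiSur A b R Q lx lξ τ ζ x ζ = phi A b R Q lx lξ τ x ζ := by
  unfold phi phiSur
  congr 1
  congr 1
  exact Finset.sum_congr rfl fun i _ => sur_self hτ _

/-- The crucial midpoint identity for the surrogate. -/
lemma phiSur_midpoint {m n : ℕ} (A : Matrix (Fin m) (Fin n) ℝ) (b : Fin m → ℝ)
    (R : Matrix (Fin m) (Fin m) ℝ) (Q : Matrix (Fin n) (Fin n) ℝ)
    (lx lξ τ : ℝ) (hτ : 0 < τ) (ζ x1 x2 ξ1 ξ2 : Fin n → ℝ) :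
    phiSur A b R Q lx lξ τ ζ ((1/2 : ℝ) • (x1 + x2)) ((1/2 : ℝ) • (ξ1 + ξ2))
      = (phiSur A b R Q lx lξ τ ζ x1 ξ1 + phiSur A b R Q lx lξ τ ζ x2 ξ2) / 2
        - (wnormSq R⁻¹ ((1/2 : ℝ) • (A.mulVec (Q.mulVec (x1 - x2)) + A.mulVec (ξ1 - ξ2)))
          + lx ^ 2 * wnormSq Q ((1/2 : ℝ) • (x1 - x2))
          + lξ ^ 2 * ∑ i, ((ξ1 i - ξ2 i) / 2) ^ 2 / (2 * Real.sqrt ((ζ i) ^ 2 + τ ^ 2))) := by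
  have hres : wnormSq R⁻¹ (A.mulVec (Q.mulVec ((1/2 : ℝ) • (x1 + x2)))
        + A.mulVec ((1/2 : ℝ) • (ξ1 + ξ2)) - b)
      = (wnormSq R⁻¹ (A.mulVec (Q.mulVec x1) + A.mulVec ξ1 - b)
          + wnormSq R⁻¹ (A.mulVec (Q.mulVec x2) + A.mulVec ξ2 - b)) / 2
        - wnormSq R⁻¹ ((1/2 : ℝ) • (A.mulVec (Q.mulVec (x1 - x2)) + A.mulVec (ξ1 - ξ2))) := by
    rw [residual_mid A b Q x1 x2 ξ1 ξ2, ← residual_diff A b Q x1 x2 ξ1 ξ2]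
    exact wnormSq_midpoint _ _ _
  have hx : wnormSq Q ((1/2 : ℝ) • (x1 + x2))
      = (wnormSq Q x1 + wnormSq Q x2) / 2 - wnormSq Q ((1/2 : ℝ) • (x1 - x2)) :=
    wnormSq_midpoint _ _ _
  have hsum : ∑ i, (((((1/2 : ℝ) • (ξ1 + ξ2)) i) ^ 2 + τ ^ 2)
          / (2 * Real.sqrt ((ζ i) ^ 2 + τ ^ 2)) + Real.sqrt ((ζ i) ^ 2 + τ ^ 2) / 2)
      = ((∑ i, (((ξ1 i) ^ 2 + τ ^ 2) / (2 * Real.sqrt ((ζ i) ^ 2 + τ ^ 2))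
            + Real.sqrt ((ζ i) ^ 2 + τ ^ 2) / 2))
          + ∑ i, (((ξ2 i) ^ 2 + τ ^ 2) / (2 * Real.sqrt ((ζ i) ^ 2 + τ ^ 2))
            + Real.sqrt ((ζ i) ^ 2 + τ ^ 2) / 2)) / 2
        - ∑ i, ((ξ1 i - ξ2 i) / 2) ^ 2 / (2 * Real.sqrt ((ζ i) ^ 2 + τ ^ 2)) := by
    have hper : ∀ i : Fin n, ((((1/2 : ℝ) • (ξ1 + ξ2)) i) ^ 2 + τ ^ 2)
          / (2 * Real.sqrt ((ζ i) ^ 2 + τ ^ 2)) + Real.sqrt ((ζ i) ^ 2 + τ ^ 2) / 2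
        = ((((ξ1 i) ^ 2 + τ ^ 2) / (2 * Real.sqrt ((ζ i) ^ 2 + τ ^ 2))
              + Real.sqrt ((ζ i) ^ 2 + τ ^ 2) / 2)
            + (((ξ2 i) ^ 2 + τ ^ 2) / (2 * Real.sqrt ((ζ i) ^ 2 + τ ^ 2))
              + Real.sqrt ((ζ i) ^ 2 + τ ^ 2) / 2)) / 2
          - ((ξ1 i - ξ2 i) / 2) ^ 2 / (2 * Real.sqrt ((ζ i) ^ 2 + τ ^ 2)) := by
      intro i
      have htpos : 0 < Real.sqrt ((ζ i) ^ 2 + τ ^ 2) := Real.sqrt_pos.mpr (by positivity)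
      have happ : ((1/2 : ℝ) • (ξ1 + ξ2)) i = (ξ1 i + ξ2 i) / 2 := by
        simp [Pi.smul_apply, Pi.add_apply]; ring
      rw [happ]
      field_simp
      ring
    calc ∑ i, (((((1/2 : ℝ) • (ξ1 + ξ2)) i) ^ 2 + τ ^ 2)
          / (2 * Real.sqrt ((ζ i) ^ 2 + τ ^ 2)) + Real.sqrt ((ζ i) ^ 2 + τ ^ 2) / 2)
        = ∑ i, (((((ξ1 i) ^ 2 + τ ^ 2) / (2 * Real.sqrt ((ζ i) ^ 2 + τ ^ 2))
              + Real.sqrt ((ζ i) ^ 2 + τ ^ 2) / 2)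
            + (((ξ2 i) ^ 2 + τ ^ 2) / (2 * Real.sqrt ((ζ i) ^ 2 + τ ^ 2))
              + Real.sqrt ((ζ i) ^ 2 + τ ^ 2) / 2)) / 2
          - ((ξ1 i - ξ2 i) / 2) ^ 2 / (2 * Real.sqrt ((ζ i) ^ 2 + τ ^ 2))) :=
          Finset.sum_congr rfl fun i _ => hper i
      _ = _ := by
          rw [Finset.sum_sub_distrib, ← Finset.sum_div, Finset.sum_add_distrib]
  unfold phiSur
  rw [hres, hx, hsum]
  ring

/-- Theorem 3.2, first part: successive differences of the MM iterates tend to zero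
in the Euclidean norm. -/
theorem theorem_3_2_differences_tend_to_zero (m n : ℕ) (hm : 0 < m) (hn : 0 < n)
    (A : Matrix (Fin m) (Fin n) ℝ) (b : Fin m → ℝ)
    (R : Matrix (Fin m) (Fin m) ℝ) (Q : Matrix (Fin n) (Fin n) ℝ)
    (hR : R.PosDef) (hQ : Q.PosDef) (lx lξ τ : ℝ)
    (hlx : 0 < lx) (hlξ : 0 < lξ) (hτ : 0 < τ)
    (x ξ : ℕ → Fin n → ℝ)
    (hmin : ∀ k : ℕ, ∀ x' ξ' : Fin n → ℝ,
      phiSur A b R Q lx lξ τ (ξ k) (x (k + 1)) (ξ (k + 1)) ≤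
        phiSur A b R Q lx lξ τ (ξ k) x' ξ') :
    Filter.Tendsto (fun k : ℕ => Real.sqrt (∑ i, (x (k + 1) i - x k i) ^ 2))
      Filter.atTop (nhds 0) ∧
    Filter.Tendsto (fun k : ℕ => Real.sqrt (∑ i, (ξ (k + 1) i - ξ k i) ^ 2))
      Filter.atTop (nhds 0) := by
  classical
  have hRinv : (R⁻¹).PosSemidef := hR.inv.posSemidef
  have hQsd : Q.PosSemidef := hQ.posSemidef
  set F : ℕ → ℝ := fun k => phi A b R Q lx lξ τ (x k) (ξ k) with hF
  -- nonnegativity of φ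
  have hphi_nonneg : ∀ x' ξ' : Fin n → ℝ, 0 ≤ phi A b R Q lx lξ τ x' ξ' := by
    intro x' ξ'
    unfold phi
    have h1 := wnormSq_nonneg hRinv (A.mulVec (Q.mulVec x') + A.mulVec ξ' - b)
    have h2 := wnormSq_nonneg hQsd x'
    have h3 : 0 ≤ ∑ i, Real.sqrt ((ξ' i) ^ 2 + τ ^ 2) :=
      Finset.sum_nonneg fun i _ => Real.sqrt_nonneg _
    have h4 := mul_nonneg (sq_nonneg lx) h2
    have h5 := mul_nonneg (sq_nonneg lξ) h3
    linarith
  -- descent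
  have hdesc : ∀ k, F (k + 1) ≤ F k := by
    intro k
    calc F (k + 1) ≤ phiSur A b R Q lx lξ τ (ξ k) (x (k + 1)) (ξ (k + 1)) :=
          phi_le_phiSur A b R Q lx lξ τ hτ _ _ _
      _ ≤ phiSur A b R Q lx lξ τ (ξ k) (x k) (ξ k) := hmin k _ _
      _ = F k := phiSur_self A b R Q lx lξ τ hτ _ _
  have hanti : Antitone F := antitone_nat_of_succ_le hdesc
  have hbdd : BddBelow (Set.range F) := ⟨0, by rintro _ ⟨k, rfl⟩; exact hphi_nonneg _ _⟩
  have hFlim : Filter.Tendsto F Filter.atTop (nhds (⨅ k, F k)) :=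
    tendsto_atTop_ciInf hanti hbdd
  have hG : Filter.Tendsto (fun k => F k - F (k + 1)) Filter.atTop (nhds 0) := by
    have h2 : Filter.Tendsto (fun k => F (k + 1)) Filter.atTop (nhds (⨅ k, F k)) :=
      hFlim.comp (Filter.tendsto_add_atTop_nat 1)
    simpa using hFlim.sub h2
  have hGnonneg : ∀ k, 0 ≤ F k - F (k + 1) := fun k => sub_nonneg.mpr (hdesc k)
  -- uniform bound on √(ξₖᵢ² + τ²)
  set C : ℝ := F 0 / lξ ^ 2 with hCdef
  have hbound : ∀ k i, Real.sqrt ((ξ k i) ^ 2 + τ ^ 2) ≤ C := by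
    intro k i
    have hsingle : Real.sqrt ((ξ k i) ^ 2 + τ ^ 2)
        ≤ ∑ j, Real.sqrt ((ξ k j) ^ 2 + τ ^ 2) :=
      Finset.single_le_sum (f := fun j => Real.sqrt ((ξ k j) ^ 2 + τ ^ 2))
        (fun j _ => Real.sqrt_nonneg _) (Finset.mem_univ i)
    have h1 : lξ ^ 2 * ∑ j, Real.sqrt ((ξ k j) ^ 2 + τ ^ 2) ≤ F k := by
      show _ ≤ phi A b R Q lx lξ τ (x k) (ξ k)
      unfold phi
      have ha := wnormSq_nonneg hRinv (A.mulVec (Q.mulVec (x k)) + A.mulVec (ξ k) - b)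
      have hb := mul_nonneg (sq_nonneg lx) (wnormSq_nonneg hQsd (x k))
      linarith
    have h2 : F k ≤ F 0 := hanti (Nat.zero_le k)
    rw [hCdef, le_div_iff₀ (by positivity)]
    have := mul_le_mul_of_nonneg_left hsingle (le_of_lt (by positivity : (0:ℝ) < lξ ^ 2))
    linarith
  have hCpos : 0 < C := lt_of_lt_of_le (Real.sqrt_pos.mpr (by positivity)) (hbound 0 ⟨0, hn⟩)
  obtain ⟨μ, hμ, hcoer⟩ := posdef_coercive hn hQ
  -- key inequality for each k
  have hkey : ∀ k,
      lx ^ 2 * wnormSq Q ((1/2 : ℝ) • (x (k + 1) - x k)) ≤ (F k - F (k + 1)) / 2 ∧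
      lξ ^ 2 * ∑ i, ((ξ (k + 1) i - ξ k i) / 2) ^ 2
          / (2 * Real.sqrt ((ξ k i) ^ 2 + τ ^ 2)) ≤ (F k - F (k + 1)) / 2 := by
    intro k
    set ζ := ξ k
    have hmid := phiSur_midpoint A b R Q lx lξ τ hτ ζ (x (k + 1)) (x k) (ξ (k + 1)) (ξ k)
    have hmin' := hmin k ((1/2 : ℝ) • (x (k + 1) + x k)) ((1/2 : ℝ) • (ξ (k + 1) + ξ k))
    rw [hmid] at hmin'
    have hS1 : phiSur A b R Q lx lξ τ ζ (x k) (ξ k) = F k :=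
      phiSur_self A b R Q lx lξ τ hτ _ _
    have hS2 : F (k + 1) ≤ phiSur A b R Q lx lξ τ ζ (x (k + 1)) (ξ (k + 1)) :=
      phi_le_phiSur A b R Q lx lξ τ hτ _ _ _
    have hDa := wnormSq_nonneg hRinv
      ((1/2 : ℝ) • (A.mulVec (Q.mulVec (x (k + 1) - x k)) + A.mulVec (ξ (k + 1) - ξ k)))
    have hDb := mul_nonneg (sq_nonneg lx) (wnormSq_nonneg hQsd ((1/2 : ℝ) • (x (k + 1) - x k)))
    have hDc : (0:ℝ) ≤ lξ ^ 2 * ∑ i, ((ξ (k + 1) i - ξ k i) / 2) ^ 2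
        / (2 * Real.sqrt ((ζ i) ^ 2 + τ ^ 2)) := by
      refine mul_nonneg (sq_nonneg lξ) (Finset.sum_nonneg fun i _ => ?_)
      have : 0 < Real.sqrt ((ζ i) ^ 2 + τ ^ 2) := Real.sqrt_pos.mpr (by positivity)
      positivity
    constructor
    · linarith
    · linarith
  -- squared x-differences go to zero
  have hx0 : Filter.Tendsto (fun k : ℕ => ∑ i, (x (k + 1) i - x k i) ^ 2)
      Filter.atTop (nhds 0) := by
    have hub : ∀ k, ∑ i, (x (k + 1) i - x k i) ^ 2
        ≤ (2 / (lx ^ 2 * μ)) * (F k - F (k + 1)) := by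
      intro k
      have h1 := (hkey k).1
      rw [wnormSq_smul] at h1
      have h2 : μ * ∑ i, (x (k + 1) i - x k i) ^ 2 ≤ wnormSq Q (x (k + 1) - x k) := by
        have := hcoer (x (k + 1) - x k)
        simpa [Pi.sub_apply] using this
      have h3 : lx ^ 2 * ((1/2 : ℝ) ^ 2 * (μ * ∑ i, (x (k + 1) i - x k i) ^ 2))
          ≤ (F k - F (k + 1)) / 2 := by
        refine le_trans ?_ h1
        have := mul_le_mul_of_nonneg_left h2 (by norm_num : (0:ℝ) ≤ (1/2 : ℝ) ^ 2)
        nlinarith [sq_nonneg lx]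
      have hpos : (0:ℝ) < lx ^ 2 * μ := by positivity
      rw [div_mul_eq_mul_div, le_div_iff₀ hpos]
      nlinarith [h3]
    refine squeeze_zero (fun k => Finset.sum_nonneg fun i _ => sq_nonneg _) hub ?_
    simpa using hG.const_mul (2 / (lx ^ 2 * μ))
  -- squared ξ-differences go to zero
  have hξ0 : Filter.Tendsto (fun k : ℕ => ∑ i, (ξ (k + 1) i - ξ k i) ^ 2)
      Filter.atTop (nhds 0) := by
    have hub : ∀ k, ∑ i, (ξ (k + 1) i - ξ k i) ^ 2
        ≤ (4 * C / lξ ^ 2) * (F k - F (k + 1)) := by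
      intro k
      have h1 := (hkey k).2
      have h2 : ∑ i, (ξ (k + 1) i - ξ k i) ^ 2 / (8 * C)
          ≤ ∑ i, ((ξ (k + 1) i - ξ k i) / 2) ^ 2 / (2 * Real.sqrt ((ξ k i) ^ 2 + τ ^ 2)) := by
        refine Finset.sum_le_sum fun i _ => ?_
        have htpos : 0 < Real.sqrt ((ξ k i) ^ 2 + τ ^ 2) := Real.sqrt_pos.mpr (by positivity)
        have htC : Real.sqrt ((ξ k i) ^ 2 + τ ^ 2) ≤ C := hbound k i
        have hh : ((ξ (k + 1) i - ξ k i) / 2) ^ 2 / (2 * Real.sqrt ((ξ k i) ^ 2 + τ ^ 2))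
            = (ξ (k + 1) i - ξ k i) ^ 2 / (8 * Real.sqrt ((ξ k i) ^ 2 + τ ^ 2)) := by
          rw [div_pow, div_div]
          congr 1
          ring
        rw [hh]
        refine div_le_div_of_nonneg_left (sq_nonneg _) (by positivity) (by linarith)
      have h3 : lξ ^ 2 * ∑ i, (ξ (k + 1) i - ξ k i) ^ 2 / (8 * C) ≤ (F k - F (k + 1)) / 2 :=
        le_trans (mul_le_mul_of_nonneg_left h2 (sq_nonneg lξ)) h1
      rw [← Finset.sum_div] at h3
      rw [mul_div_assoc'] at h3
      rw [div_le_iff₀ (by positivity : (0:ℝ) < 8 * C)] at h3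
      have hpos : (0:ℝ) < lξ ^ 2 := by positivity
      rw [div_mul_eq_mul_div, le_div_iff₀ hpos]
      nlinarith [h3]
    refine squeeze_zero (fun k => Finset.sum_nonneg fun i _ => sq_nonneg _) hub ?_
    simpa using hG.const_mul (4 * C / lξ ^ 2)
  constructor
  · have := (Real.continuous_sqrt.tendsto' 0 0 Real.sqrt_zero).comp hx0
    exact this
  · have := (Real.continuous_sqrt.tendsto' 0 0 Real.sqrt_zero).comp hξ0
    exact this
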